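/- arXiv:2203.00341 — 5 statements merged into one kernel-verified Lean document; each statement's English description precedes it below -/
import Mathlib

section
/- Let σ be a positive-definite density matrix in M_n(ℂ) with φ(x) = tr(σ x), and let P : M_n(ℂ) → M_n(ℂ) be a unital completely positive map that is GNS-symmetric with respect to φ. Then P commutes with the modular group: P(σ^{it} x σ^{-it}) = σ^{it} P(x) σ^{-it} for all t ∈ ℝ and all x ∈ M_n(ℂ). -/
open scoped ComplexOrder
open Matrix Complex

abbrev Mat (n : ℕ) := Matrix (Fin n) (Fin n) ℂ

/-- Complete positivity of a map on `M_n(ℂ)`: all sums `∑ xⱼ* P(aⱼ* aₖ) xₖ`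
are positive semidefinite. -/
def IsCP {n : ℕ} (P : Mat n → Mat n) : Prop :=
  ∀ (m : ℕ) (a x : Fin m → Mat n),
    (∑ j, ∑ k, (x j)ᴴ * P ((a j)ᴴ * a k) * x k).PosSemidef

/-- GNS-symmetry of `P` with respect to the state `φ = tr(σ ·)`. -/
def IsGNSSymm {n : ℕ} (σ : Mat n) (P : Mat n → Mat n) : Prop :=
  ∀ x y : Mat n, (σ * (P x)ᴴ * y).trace = (σ * xᴴ * P y).trace

/-- Complex power `σ^z` of a positive definite matrix, via the spectral
decomposition. -/
noncomputable def mpow {n : ℕ} {σ : Mat n} (hσ : σ.PosDef) (z : ℂ) : Mat n :=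
  (hσ.1.eigenvectorUnitary : Mat n) *
    Matrix.diagonal (fun i => (hσ.1.eigenvalues i : ℂ) ^ z) *
    star (hσ.1.eigenvectorUnitary : Mat n)

/-! Complete positivity makes `P` commute with `ᴴ`, and then GNS-symmetry reads
`tr(σ P(a) b) = tr(σ a P(b))`; by nondegeneracy of the trace pairing this says that `P` commutes
with `x ↦ σ x σ⁻¹`. Conjugating by the eigenvector unitary of `σ = U diag(λ) U*`, that map
multiplies the matrix unit `E_kl` by `λ_k / λ_l`, so the conjugated `P` sends `E_kl` into the
entries `(i, j)` with `λ_i / λ_j = λ_k / λ_l`. On all of these `x ↦ σ^z x σ^(-z)` acts by the same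
scalar `(λ_k / λ_l)^z`. -/

theorem Matrix.conjTranspose_eq_of_forall_isHermitian {ι : Type*} {A B : Matrix ι ι ℂ}
    (h : ∀ d : ℂ, (d • A + star d • B).IsHermitian) : Aᴴ = B := by
  have h1 : Aᴴ + Bᴴ = A + B := by simpa [IsHermitian] using h 1
  have hI : -(I • Aᴴ) + I • Bᴴ = I • A - I • B := by
    simpa [IsHermitian, sub_eq_add_neg] using h I
  have hI' : Aᴴ - Bᴴ = B - A := by
    have := congrArg (I • ·) hI
    simp only [smul_add, smul_sub, smul_neg, smul_smul, I_mul_I, neg_one_smul] at this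
    linear_combination (norm := module) this
  linear_combination (norm := module) (1 / 2 : ℂ) • (h1 + hI')

theorem IsCP.conjTranspose_map {n : ℕ} {P : Mat n →ₗ[ℂ] Mat n} (hP : IsCP P) (y : Mat n) :
    (P y)ᴴ = P yᴴ := by
  have hsq : ∀ y : Mat n, (P (yᴴ * y)).IsHermitian := fun y => by
    simpa using (hP 1 (fun _ => y) (fun _ => 1)).1
  refine conjTranspose_eq_of_forall_isHermitian fun d => ?_
  have h := (hP 2 ![1, y] ![1, d • 1]).1
  have hsum : ∑ j, ∑ k, (![1, d • 1] j)ᴴ * P ((![1, y] j)ᴴ * ![1, y] k) * ![1, d • 1] k =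
      P (1ᴴ * 1) + (d • P y + star d • P yᴴ) + (star d * d) • P (yᴴ * y) := by
    simp only [Fin.sum_univ_two, cons_val_zero, cons_val_one, cons_val_fin_one, conjTranspose_one,
      conjTranspose_smul, one_mul, mul_one, Algebra.mul_smul_comm, Algebra.smul_mul_assoc]
    module
  rw [hsum] at h
  convert (h.sub (hsq 1)).sub ((hsq y).smul (IsSelfAdjoint.star_mul_self d)) using 1
  abel

def CommutesWithSandwich {M : Type*} [Mul M] (P : M → M) (a b : M) : Prop :=
  ∀ x, P (a * x * b) = a * P x * b

theorem commutesWithSandwich_of_map_mul_mul_eq {M : Type*} [Monoid M] {P : M → M} {a b : M}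
    (hab : a * b = 1) (hba : b * a = 1) (h : ∀ w, P (a * w) * a = a * P (w * a)) :
    CommutesWithSandwich P a b := fun x =>
  calc P (a * x * b) = P (a * (x * b)) * a * b := by
        rw [mul_assoc _ a b, hab, mul_one, mul_assoc]
    _ = a * P (x * b * a) * b := by rw [h]
    _ = a * P x * b := by rw [mul_assoc x, hba, mul_one]

theorem AlgEquiv.commutesWithSandwich_conj_iff {R A : Type*} [CommSemiring R] [Semiring A]
    [Algebra R A] (e : A ≃ₐ[R] A) (P : A →ₗ[R] A) (a b : A) :
    CommutesWithSandwich P (e a) (e b) ↔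
      CommutesWithSandwich (e.symm.toLinearMap ∘ₗ P ∘ₗ e.toLinearMap) a b := by
  refine ⟨fun h x => ?_, fun h y => ?_⟩
  · simp [h (e x)]
  · simpa using congrArg e (h (e.symm y))

theorem CommutesWithSandwich.diagonal_of_imp {ι R : Type*} [Fintype ι] [DecidableEq ι]
    [CommRing R] [IsDomain R] {Q : Matrix ι ι R →ₗ[R] Matrix ι ι R} {a b a' b' : ι → R}
    (hQ : CommutesWithSandwich Q (diagonal a) (diagonal b))
    (hab : ∀ i j k l, a i * b j = a k * b l → a' i * b' j = a' k * b' l) :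
    CommutesWithSandwich Q (diagonal a') (diagonal b') := by
  intro x
  induction x using Matrix.induction_on' with
  | h_zero => simp
  | h_add x y hx hy => simp only [mul_add, add_mul, map_add, hx, hy]
  | h_std_basis k l c =>
    have hsingle : ∀ a b : ι → R,
        diagonal a * single k l c * diagonal b = (a k * b l) • single k l c := by
      intro a b
      ext i j
      simp only [mul_diagonal, diagonal_mul, Matrix.smul_apply, single_apply, smul_eq_mul]
      split_ifs with hkl
      · obtain ⟨rfl, rfl⟩ := hkl
        ring
      · simp
    ext i j
    have hij := congr_fun₂ (hQ (single k l c)) i j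
    simp only [hsingle, map_smul, Matrix.smul_apply, smul_eq_mul, diagonal_mul, mul_diagonal]
      at hij ⊢
    rcases eq_or_ne (Q (single k l c) i j) 0 with hq | hq
    · simp [hq]
    · rw [hab k l i j (mul_right_cancel₀ hq (by linear_combination hij))]
      ring

namespace IsGNSSymm

variable {n : ℕ} {σ : Mat n} {P : Mat n → Mat n}

theorem trace_mul_map_mul (hP : IsGNSSymm σ P) (hstar : ∀ y, (P y)ᴴ = P yᴴ) (a b : Mat n) :
    (σ * P a * b).trace = (σ * a * P b).trace := by
  simpa [hstar] using hP aᴴ b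

theorem map_mul_mul_eq_mul_map_mul (hP : IsGNSSymm σ P) (hstar : ∀ y, (P y)ᴴ = P yᴴ)
    (w : Mat n) : P (σ * w) * σ = σ * P (w * σ) := by
  have hsymm := hP.trace_mul_map_mul hstar
  rw [ext_iff_trace_mul_left]
  intro z
  calc (z * (P (σ * w) * σ)).trace = (σ * z * P (σ * w)).trace := by
        rw [← mul_assoc, trace_mul_comm, ← mul_assoc]
    _ = (σ * P z * (σ * w)).trace := (hsymm z (σ * w)).symm
    _ = (σ * (w * σ) * P z).trace := by
        rw [trace_mul_comm]; simp only [mul_assoc]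
    _ = (σ * P (w * σ) * z).trace := (hsymm (w * σ) z).symm
    _ = (z * (σ * P (w * σ))).trace := trace_mul_comm _ _

end IsGNSSymm

theorem Complex.ofReal_cpow_mul_ofReal_cpow_neg {p q : ℝ} (hp : 0 < p) (hq : 0 < q) (z : ℂ) :
    (p : ℂ) ^ z * (q : ℂ) ^ (-z) = ((p / q : ℝ) : ℂ) ^ z := by
  have harg : (q : ℂ).arg ≠ Real.pi := by
    rw [arg_ofReal_of_nonneg hq.le]
    exact Real.pi_ne_zero.symm
  rw [div_eq_mul_inv, ofReal_mul, mul_cpow_ofReal_nonneg hp.le (inv_nonneg.2 hq.le), ofReal_inv,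
    inv_cpow _ _ harg, cpow_neg]

section mpow

variable {n : ℕ} {σ : Mat n} (hσ : σ.PosDef)

theorem mpow_eq_conjStarAlgAut (z : ℂ) :
    mpow hσ z = Unitary.conjStarAlgAut ℂ _ hσ.1.eigenvectorUnitary
      (diagonal fun i => (hσ.1.eigenvalues i : ℂ) ^ z) := rfl

theorem mpow_mul_mpow (z w : ℂ) : mpow hσ z * mpow hσ w = mpow hσ (z + w) := by
  simp only [mpow_eq_conjStarAlgAut, ← map_mul, diagonal_mul_diagonal,
    cpow_add _ _ (ofReal_ne_zero.2 (hσ.eigenvalues_pos _).ne')]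

theorem mpow_zero : mpow hσ 0 = 1 := by
  simp [mpow_eq_conjStarAlgAut]

theorem mpow_one : mpow hσ 1 = σ := by
  conv_rhs => rw [hσ.1.spectral_theorem]
  simp [mpow_eq_conjStarAlgAut, Function.comp_def]

theorem CommutesWithSandwich.mpow {P : Mat n →ₗ[ℂ] Mat n}
    (hP : CommutesWithSandwich P (mpow hσ 1) (mpow hσ (-1))) (z : ℂ) :
    CommutesWithSandwich P (mpow hσ z) (mpow hσ (-z)) := by
  simp only [mpow_eq_conjStarAlgAut] at hP ⊢
  rw [← StarAlgEquiv.coe_toAlgEquiv, AlgEquiv.commutesWithSandwich_conj_iff] at hP ⊢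
  refine hP.diagonal_of_imp fun i j k l h => ?_
  have hpos := hσ.eigenvalues_pos
  simp only [ofReal_cpow_mul_ofReal_cpow_neg (hpos _) (hpos _)] at h ⊢
  rw [cpow_one, cpow_one, ofReal_inj] at h
  rw [h]

end mpow

theorem stmt_1_general {n : ℕ} (σ : Mat n) (hσ : σ.PosDef)
    (P : Mat n →ₗ[ℂ] Mat n) (hCP : IsCP P)
    (hGNS : IsGNSSymm σ P) :
    ∀ (t : ℝ) (x : Mat n),
      P (mpow hσ (Complex.I * t) * x * mpow hσ (-(Complex.I * t))) =
        mpow hσ (Complex.I * t) * P x * mpow hσ (-(Complex.I * t)) := by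
  have hΔ : CommutesWithSandwich P (mpow hσ 1) (mpow hσ (-1)) := by
    refine commutesWithSandwich_of_map_mul_mul_eq ?_ ?_ ?_
    · rw [mpow_mul_mpow, add_neg_cancel, mpow_zero]
    · rw [mpow_mul_mpow, neg_add_cancel, mpow_zero]
    · rw [mpow_one]
      exact hGNS.map_mul_mul_eq_mul_map_mul hCP.conjTranspose_map
  exact fun t => hΔ.mpow hσ (I * t)

/-- a GNS-symmetric unital completely positive map commutes with
the modular group `x ↦ σ^{it} x σ^{-it}`. -/
theorem stmt_1 {n : ℕ} (σ : Mat n) (hσ : σ.PosDef) (htr : σ.trace = 1)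
    (P : Mat n →ₗ[ℂ] Mat n) (hP1 : P 1 = 1) (hCP : IsCP P)
    (hGNS : IsGNSSymm σ P) :
    ∀ (t : ℝ) (x : Mat n),
      P (mpow hσ (Complex.I * t) * x * mpow hσ (-(Complex.I * t))) =
        mpow hσ (Complex.I * t) * P x * mpow hσ (-(Complex.I * t)) :=
  stmt_1_general σ hσ P hCP hGNS
end

section
/- Let σ be a positive-definite density matrix in M_n(ℂ) with φ = tr(σ ·), and suppose Φ : M_n(ℂ) → M_n(ℂ) is completely positive and GNS-symmetric with respect to φ. Define L(x) = ½(Φ(1)x + xΦ(1)) − Φ(x). Then L is GNS-symmetric with respect to φ, L(1) = 0, and L is conditionally negative definite: whenever a_1,…,a_m, x_1,…,x_m ∈ M_n(ℂ) satisfy Σ_j a_j x_j = 0, one has Σ_{j,k} x_j* L(a_j* a_k) x_k ≤ 0. -/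
/-! Complete positivity makes `Φ` `*`-preserving, and GNS-symmetry then forces `Φ 1` into the
centralizer of `σ`. Hence left and right multiplication by the Hermitian matrix `Φ 1` are
GNS-symmetric, and so is `L`. When `∑ aⱼ xⱼ = 0`, the multiplication part of `L` contributes
nothing to `∑ xⱼ* L(aⱼ* aₖ) xₖ`, which is therefore minus the completely positive sum for `Φ`. -/

open scoped ComplexOrder
open Matrix Complex

namespace IsCP

variable {n : ℕ} {Φ : Mat n →ₗ[ℂ] Mat n}

theorem posSemidef_map_conjTranspose_mul_self (hΦ : IsCP Φ) (a : Mat n) :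
    (Φ (aᴴ * a)).PosSemidef := by
  simpa using hΦ 1 (fun _ => a) (fun _ => 1)

theorem isHermitian_map_one (hΦ : IsCP Φ) : (Φ 1).IsHermitian := by
  simpa using (hΦ.posSemidef_map_conjTranspose_mul_self 1).isHermitian

theorem isHermitian_map_add_map_conjTranspose (hΦ : IsCP Φ) (y : Mat n) :
    (Φ y + Φ yᴴ).IsHermitian := by
  have hsq : Φ ((1 + y)ᴴ * (1 + y)) = Φ 1 + (Φ y + Φ yᴴ) + Φ (yᴴ * y) := by
    simp only [conjTranspose_add, conjTranspose_one, Matrix.add_mul, Matrix.mul_add,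
      Matrix.one_mul, Matrix.mul_one, map_add]
    abel
  have h := (hΦ.posSemidef_map_conjTranspose_mul_self (1 + y)).isHermitian
  rw [hsq] at h
  simpa using (h.sub (hΦ.posSemidef_map_conjTranspose_mul_self y).isHermitian).sub
    hΦ.isHermitian_map_one

/-- Polarization: combine the Hermitian-ness of `Φ y + Φ yᴴ` for `y = x` and `y = I • x`. -/
theorem map_conjTranspose (hΦ : IsCP Φ) (x : Mat n) : Φ xᴴ = (Φ x)ᴴ := by
  have hre := (hΦ.isHermitian_map_add_map_conjTranspose x).eq
  have him := (hΦ.isHermitian_map_add_map_conjTranspose (I • x)).eq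
  simp only [conjTranspose_add, conjTranspose_smul, map_smul, Complex.star_def,
    conj_I, neg_smul, map_neg, conjTranspose_neg] at hre him
  have him' : (Φ xᴴ)ᴴ - (Φ x)ᴴ = Φ x - Φ xᴴ :=
    smul_right_injective _ I_ne_zero <| by
      simp only [smul_sub]
      linear_combination (norm := module) him
  linear_combination (norm := module) (-1/2 : ℂ) • hre + (1/2 : ℂ) • him'

end IsCP

namespace IsGNSSymm

variable {n : ℕ} {σ : Mat n} {P Q : Mat n → Mat n}

theorem add (hP : IsGNSSymm σ P) (hQ : IsGNSSymm σ Q) : IsGNSSymm σ (P + Q) := by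
  intro x y
  simp only [Pi.add_apply, conjTranspose_add, Matrix.mul_add, Matrix.add_mul, trace_add, hP x y,
    hQ x y]

theorem sub (hP : IsGNSSymm σ P) (hQ : IsGNSSymm σ Q) : IsGNSSymm σ (P - Q) := by
  intro x y
  simp only [Pi.sub_apply, conjTranspose_sub, Matrix.mul_sub, Matrix.sub_mul, trace_sub, hP x y,
    hQ x y]

theorem smul {c : ℂ} (hc : star c = c) (hP : IsGNSSymm σ P) : IsGNSSymm σ (c • P) := by
  intro x y
  simp only [Pi.smul_apply, conjTranspose_smul, hc, Matrix.mul_smul, Matrix.smul_mul, trace_smul,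
    hP x y]

end IsGNSSymm

theorem isGNSSymm_mul_left {n : ℕ} (σ : Mat n) {c : Mat n} (hc : c.IsHermitian) :
    IsGNSSymm σ (c * ·) := by
  intro x y
  rw [conjTranspose_mul, hc.eq, Matrix.mul_assoc, Matrix.mul_assoc, Matrix.mul_assoc]

theorem isGNSSymm_mul_right {n : ℕ} {σ c : Mat n} (hc : c.IsHermitian) (hσc : Commute σ c) :
    IsGNSSymm σ (· * c) := by
  intro x y
  dsimp only
  rw [conjTranspose_mul, hc.eq, ← Matrix.mul_assoc, hσc.eq, Matrix.mul_assoc, Matrix.mul_assoc,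
    trace_mul_comm, Matrix.mul_assoc, Matrix.mul_assoc, Matrix.mul_assoc]

/-- Paired with any `y`, GNS-symmetry moves `Φ` from `1` onto `y` and back onto `1` on the other
side. -/
theorem IsGNSSymm.commute_map_one {n : ℕ} {σ : Mat n} {Φ : Mat n →ₗ[ℂ] Mat n} (hΦ : IsCP Φ)
    (hGNS : IsGNSSymm σ Φ) : Commute σ (Φ 1) := by
  refine Matrix.ext_iff_trace_mul_right.mpr fun y => ?_
  have h1 : (σ * Φ 1 * y).trace = (σ * Φ y).trace := by
    simpa [hΦ.isHermitian_map_one.eq] using hGNS 1 y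
  have h2 : (σ * Φ y).trace = (σ * y * Φ 1).trace := by
    simpa [hΦ.map_conjTranspose] using hGNS yᴴ 1
  rw [h1, h2, Matrix.mul_assoc, trace_mul_comm, Matrix.mul_assoc, trace_mul_comm]

theorem sum_sum_star_mul_anticommutator_mul_eq_zero {R ι : Type*} [NonUnitalSemiring R]
    [StarRing R] [Fintype ι] (c : R) {a x : ι → R} (h : ∑ j, a j * x j = 0) :
    ∑ j, ∑ k, star (x j) * (c * (star (a j) * a k) + star (a j) * a k * c) * x k = 0 := by
  have hstar : ∑ j, star (x j) * star (a j) = 0 := by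
    simpa only [star_sum, star_mul, star_zero] using congrArg star h
  calc ∑ j, ∑ k, star (x j) * (c * (star (a j) * a k) + star (a j) * a k * c) * x k
      = (∑ j, star (x j) * c * star (a j)) * ∑ k, a k * x k
        + (∑ j, star (x j) * star (a j)) * ∑ k, a k * c * x k := by
        simp only [Finset.sum_mul_sum, ← Finset.sum_add_distrib, mul_add, add_mul,
          mul_assoc]
    _ = 0 := by rw [h, hstar, mul_zero, zero_mul, add_zero]

theorem stmt_3_general {n : ℕ} (σ : Mat n)
    (Φ : Mat n →ₗ[ℂ] Mat n) (hCP : IsCP Φ) (hGNS : IsGNSSymm σ Φ)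
    (L : Mat n → Mat n)
    (hL : ∀ x, L x = (1/2 : ℂ) • (Φ 1 * x + x * Φ 1) - Φ x) :
    IsGNSSymm σ L ∧ L 1 = 0 ∧
      ∀ (m : ℕ) (a x : Fin m → Mat n), (∑ j, a j * x j) = 0 →
        (-(∑ j, ∑ k, (x j)ᴴ * L ((a j)ᴴ * a k) * x k)).PosSemidef := by
  have hΦ1 := hCP.isHermitian_map_one
  refine ⟨?_, ?_, fun m a x hax => ?_⟩
  · have hL' : L = (1/2 : ℂ) • ((Φ 1 * ·) + (· * Φ 1)) - ⇑Φ := funext hL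
    rw [hL']
    refine (IsGNSSymm.smul (by norm_num) ?_).sub hGNS
    exact (isGNSSymm_mul_left σ hΦ1).add (isGNSSymm_mul_right hΦ1 (hGNS.commute_map_one hCP))
  · rw [hL, mul_one, one_mul]
    module
  · have hsplit : ∑ j, ∑ k, (x j)ᴴ * L ((a j)ᴴ * a k) * x k
        = (1/2 : ℂ) • ∑ j, ∑ k, (x j)ᴴ * (Φ 1 * ((a j)ᴴ * a k) + (a j)ᴴ * a k * Φ 1) * x k
          - ∑ j, ∑ k, (x j)ᴴ * Φ ((a j)ᴴ * a k) * x k := by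
      simp only [hL, Matrix.mul_sub, Matrix.sub_mul, Matrix.mul_smul, Matrix.smul_mul,
        Finset.sum_sub_distrib, Finset.smul_sum]
    have hvanish := sum_sum_star_mul_anticommutator_mul_eq_zero (Φ 1) hax
    simp only [star_eq_conjTranspose] at hvanish
    rw [hsplit, hvanish, smul_zero, zero_sub, neg_neg]
    exact hCP m a x

/-- if `Φ` is completely positive and GNS-symmetric, then
`L(x) = ½(Φ(1)x + xΦ(1)) − Φ(x)` is GNS-symmetric, vanishes at `1`, and is
conditionally negative definite. -/
theorem stmt_3 {n : ℕ} (σ : Mat n) (hσ : σ.PosDef) (htr : σ.trace = 1)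
    (Φ : Mat n →ₗ[ℂ] Mat n) (hCP : IsCP Φ) (hGNS : IsGNSSymm σ Φ)
    (L : Mat n → Mat n)
    (hL : ∀ x, L x = (1/2 : ℂ) • (Φ 1 * x + x * Φ 1) - Φ x) :
    IsGNSSymm σ L ∧ L 1 = 0 ∧
      ∀ (m : ℕ) (a x : Fin m → Mat n), (∑ j, a j * x j) = 0 →
        (-(∑ j, ∑ k, (x j)ᴴ * L ((a j)ᴴ * a k) * x k)).PosSemidef :=
  stmt_3_general σ Φ hCP hGNS L hL
end

section
/- Let 𝓜 ⊆ M_n(ℂ) be a unital *-subalgebra, σ ∈ 𝓜 a positive-definite density matrix, φ = tr(σ ·), and E : M_n(ℂ) → 𝓜 the φ-preserving conditional expectation. If L(x) = k* x + x k − Φ(E(x)) where k ∈ 𝓜, Φ : 𝓜 → 𝓜 is completely positive with Φ(1) = k + k*, then L(1) = 0 and L is conditionally negative definite on M_n(ℂ). -/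
open scoped ComplexOrder
open Matrix Complex

/-!
Since `∑ⱼ aⱼ xⱼ = 0`, the part `k* y + y k` of `L` contributes
`(∑ aⱼ k xⱼ)* (∑ aₗ xₗ) + (∑ aⱼ xⱼ)* (∑ aₗ k xₗ) = 0` to the quadratic form, so
`-∑ xⱼ* L(aⱼ* aₗ) xₗ = ∑ xⱼ* Φ(E(aⱼ* aₗ)) xₗ`, which is positive because `Φ ∘ E` is completely
positive: complete positivity of `E` makes the block matrix `[E(aⱼ* aₖ)]` positive, factoring it
as `D* D` writes `E(aⱼ* aₖ) = ∑ᵢ cᵢⱼ* cᵢₖ`, and complete positivity of `Φ` applies to each `i`.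
-/

-- Over `ℂ`, unlike over `ℝ`, hermiticity follows from the nonnegativity of the form.
lemma Matrix.posSemidef_of_forall_star_dotProduct_mulVec_nonneg {ι : Type*} [Fintype ι]
    [DecidableEq ι] {M : Matrix ι ι ℂ} (h : ∀ v, 0 ≤ star v ⬝ᵥ (M *ᵥ v)) : M.PosSemidef := by
  rw [← Matrix.isPositive_toEuclideanLin_iff, LinearMap.isPositive_iff_complex]
  intro x
  obtain ⟨hre, him⟩ := Complex.nonneg_iff.mp (h x)
  have hinner : inner ℂ (M.toEuclideanLin x) x = star x.ofLp ⬝ᵥ (M *ᵥ x.ofLp) := by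
    rw [EuclideanSpace.inner_eq_star_dotProduct, dotProduct_star, dotProduct_comm, Complex.star_def]
    exact Complex.conj_eq_iff_im.mpr him.symm
  rw [hinner, RCLike.re_to_complex]
  exact ⟨Complex.ext (by simp) (by simpa using him), hre⟩

lemma Matrix.star_dotProduct_conjTranspose_mul_mul_mulVec {ι R : Type*} [Fintype ι]
    [CommSemiring R] [StarRing R] (Y X Z : Matrix ι ι R) (e : ι → R) :
    star e ⬝ᵥ ((Yᴴ * X * Z) *ᵥ e) = star (Y *ᵥ e) ⬝ᵥ (X *ᵥ (Z *ᵥ e)) := by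
  rw [star_mulVec, ← mulVec_mulVec, ← mulVec_mulVec, dotProduct_mulVec]

def blockGram {n m : ℕ} (E : Mat n → Mat n) (a : Fin m → Mat n) :
    Matrix (Fin m × Fin n) (Fin m × Fin n) ℂ :=
  Matrix.of fun u w => E ((a u.1)ᴴ * a w.1) u.2 w.2

lemma IsCP.posSemidef_blockGram {n m : ℕ} {E : Mat n → Mat n} (hE : IsCP E) (a : Fin m → Mat n) :
    (blockGram E a).PosSemidef := by
  refine Matrix.posSemidef_of_forall_star_dotProduct_mulVec_nonneg fun v => ?_
  rcases isEmpty_or_nonempty (Fin n) with _ | ⟨⟨z⟩⟩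
  · simp [dotProduct]
  let y : Fin m → Mat n := fun j => Matrix.of fun p r => if r = z then v (j, p) else 0
  have hy : ∀ j, y j *ᵥ Pi.single z 1 = fun p => v (j, p) := by
    intro j; ext p; simp [y, mulVec_single]
  calc 0 ≤ _ := (hE m a y).dotProduct_mulVec_nonneg (Pi.single z 1)
    _ = ∑ j, ∑ k, star (fun p => v (j, p)) ⬝ᵥ (E ((a j)ᴴ * a k) *ᵥ fun q => v (k, q)) := by
      simp only [sum_mulVec, dotProduct_sum, star_dotProduct_conjTranspose_mul_mul_mulVec, hy]
    _ = star v ⬝ᵥ (blockGram E a *ᵥ v) := by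
      simp only [dotProduct, mulVec, Fintype.sum_prod_type, Finset.mul_sum, blockGram, of_apply,
        Pi.star_apply]
      exact Finset.sum_congr rfl fun j _ => Finset.sum_comm

open scoped MatrixOrder in
lemma IsCP.exists_eq_sum_conjTranspose_mul {n m : ℕ} {E : Mat n → Mat n} (hE : IsCP E)
    (a : Fin m → Mat n) :
    ∃ c : Fin m → Fin m → Mat n, ∀ j k, E ((a j)ᴴ * a k) = ∑ i, (c i j)ᴴ * c i k := by
  obtain ⟨D, hD⟩ := CStarAlgebra.nonneg_iff_eq_star_mul_self.mp (hE.posSemidef_blockGram a).nonneg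
  refine ⟨fun i j => Matrix.of fun r p => D (i, r) (j, p), fun j k => ?_⟩
  ext p q
  have := congrFun (congrFun hD (j, p)) (k, q)
  simpa [blockGram, mul_apply, Matrix.sum_apply, Fintype.sum_prod_type] using this

lemma IsCP.comp {n : ℕ} {Φ : Mat n →ₗ[ℂ] Mat n} {E : Mat n → Mat n} (hΦ : IsCP Φ) (hE : IsCP E) :
    IsCP (Φ ∘ E) := by
  intro m a x
  obtain ⟨c, hc⟩ := hE.exists_eq_sum_conjTranspose_mul a
  have hsum : ∑ j, ∑ k, (x j)ᴴ * Φ (E ((a j)ᴴ * a k)) * x k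
      = ∑ i, ∑ j, ∑ k, (x j)ᴴ * Φ ((c i j)ᴴ * c i k) * x k := by
    simp only [hc, map_sum, Finset.mul_sum, Finset.sum_mul]
    calc _ = ∑ j, ∑ i, ∑ k, (x j)ᴴ * Φ ((c i j)ᴴ * c i k) * x k :=
          Finset.sum_congr rfl fun j _ => Finset.sum_comm
      _ = _ := Finset.sum_comm
  change (∑ j, ∑ k, (x j)ᴴ * Φ (E ((a j)ᴴ * a k)) * x k).PosSemidef
  rw [hsum]
  exact posSemidef_sum _ fun i _ => hΦ m (c i) x

section ChristensenEvans

variable {R : Type*} [Ring R] [StarRing R]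

def christensenEvans (k : R) (Ψ : R → R) (x : R) : R :=
  star k * x + x * k - Ψ x

lemma christensenEvans_one {k : R} {Ψ : R → R} (h : Ψ 1 = k + star k) :
    christensenEvans k Ψ 1 = 0 := by
  simp [christensenEvans, h, add_comm]

lemma sum_star_mul_christensenEvans_mul {ι : Type*} (s : Finset ι) (k : R) (Ψ : R → R)
    (a x : ι → R) (h : ∑ j ∈ s, a j * x j = 0) :
    ∑ j ∈ s, ∑ l ∈ s, star (x j) * christensenEvans k Ψ (star (a j) * a l) * x l
      = -∑ j ∈ s, ∑ l ∈ s, star (x j) * Ψ (star (a j) * a l) * x l := by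
  have expand : ∀ j l, star (x j) * christensenEvans k Ψ (star (a j) * a l) * x l
      = star (a j * k * x j) * (a l * x l) + star (a j * x j) * (a l * k * x l)
        - star (x j) * Ψ (star (a j) * a l) * x l := by
    intro j l
    simp only [christensenEvans, star_mul]
    noncomm_ring
  simp only [expand, Finset.sum_sub_distrib, Finset.sum_add_distrib, ← Finset.sum_mul_sum,
    ← star_sum, h, mul_zero, star_zero, zero_mul, zero_add, zero_sub]

end ChristensenEvans

def IsCondNegDef {n : ℕ} (L : Mat n → Mat n) : Prop :=
  ∀ (m : ℕ) (a x : Fin m → Mat n), ∑ j, a j * x j = 0 →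
    (-(∑ j, ∑ l, (x j)ᴴ * L ((a j)ᴴ * a l) * x l)).PosSemidef

lemma IsCP.isCondNegDef_christensenEvans {n : ℕ} {Ψ : Mat n → Mat n} (hΨ : IsCP Ψ) (k : Mat n) :
    IsCondNegDef (christensenEvans k Ψ) := by
  intro m a x h
  have := sum_star_mul_christensenEvans_mul Finset.univ k Ψ a x h
  simp only [star_eq_conjTranspose] at this
  rw [this, neg_neg]
  exact hΨ m a x

theorem stmt_5_general {n : ℕ}
    (E : Mat n →ₗ[ℂ] Mat n)
    (hE1 : E 1 = 1)
    (hECP : IsCP E)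
    (k : Mat n)
    (Φ : Mat n →ₗ[ℂ] Mat n) (hΦCP : IsCP Φ)
    (hΦ1 : Φ 1 = k + kᴴ)
    (L : Mat n → Mat n)
    (hL : ∀ x, L x = kᴴ * x + x * k - Φ (E x)) :
    L 1 = 0 ∧
      ∀ (m : ℕ) (a x : Fin m → Mat n), (∑ j, a j * x j) = 0 →
        (-(∑ j, ∑ l, (x j)ᴴ * L ((a j)ᴴ * a l) * x l)).PosSemidef := by
  obtain rfl : L = christensenEvans k (Φ ∘ E) := funext hL
  exact ⟨christensenEvans_one (by simp [hE1, hΦ1, star_eq_conjTranspose]),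
    (hΦCP.comp hECP).isCondNegDef_christensenEvans k⟩

/-- the Christensen–Evans-form extension
`L(x) = k* x + x k − Φ(E(x))` (with `k ∈ 𝓜`, `Φ` completely positive on `𝓜`
with `Φ(1) = k + k*`, and `E` the φ-preserving conditional expectation onto
`𝓜`) satisfies `L(1) = 0` and is conditionally negative definite. -/
theorem stmt_5 {n : ℕ} (S : StarSubalgebra ℂ (Mat n))
    (σ : Mat n) (hσS : σ ∈ S) (hσ : σ.PosDef) (htr : σ.trace = 1)
    (E : Mat n →ₗ[ℂ] Mat n)
    (hErange : ∀ x, E x ∈ S)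
    (hE1 : E 1 = 1)
    (hECP : IsCP E)
    (hEbimod : ∀ a b x : Mat n, a ∈ S → b ∈ S → E (a * x * b) = a * E x * b)
    (hEproj : ∀ x ∈ S, E x = x)
    (hEφ : ∀ x : Mat n, (σ * E x).trace = (σ * x).trace)
    (k : Mat n) (hk : k ∈ S)
    (Φ : Mat n →ₗ[ℂ] Mat n) (hΦS : ∀ x ∈ S, Φ x ∈ S) (hΦCP : IsCP Φ)
    (hΦ1 : Φ 1 = k + kᴴ)
    (L : Mat n → Mat n)
    (hL : ∀ x, L x = kᴴ * x + x * k - Φ (E x)) :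
    L 1 = 0 ∧
      ∀ (m : ℕ) (a x : Fin m → Mat n), (∑ j, a j * x j) = 0 →
        (-(∑ j, ∑ l, (x j)ᴴ * L ((a j)ᴴ * a l) * x l)).PosSemidef :=
  stmt_5_general E hE1 hECP k Φ hΦCP hΦ1 L hL
end

section
/- Let X be a finite set, m a probability measure with full support, and L a linear operator on (X → ℂ) that is symmetric with respect to the m-weighted inner product, satisfies L(1) = 0, and is conditionally negative definite (i.e., for all f₁,…,f_k and g₁,…,g_k with Σ_j f_j g_j = 0, one has Σ_{j,k} \overline{g_j} L(\overline{f_j} f_k) g_k ≤ 0 pointwise). Then there exists Q : X × X → [0,∞) with Q(x,y) m(x) = Q(y,x) m(y) such that (L f)(x) = Σ_y Q(x,y)(f(x) − f(y)). -/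
open scoped ComplexOrder
open Complex

/-- a symmetric, unit-preserving (`L(1)=0`), conditionally
negative definite operator on functions on a finite set is a graph Laplacian
of a reversible weighted graph. -/
theorem stmt_7 {X : Type*} [Fintype X] [DecidableEq X]
    (m : X → ℝ) (hm : ∀ x, 0 < m x) (hm1 : ∑ x, m x = 1)
    (L : (X → ℂ) →ₗ[ℂ] (X → ℂ))
    (hsymm : ∀ f g : X → ℂ,
      ∑ x, (starRingEnd ℂ) (L f x) * g x * (m x : ℂ) =
        ∑ x, (starRingEnd ℂ) (f x) * L g x * (m x : ℂ))
    (h1 : L (fun _ => 1) = 0)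
    (hcnd : ∀ (k : ℕ) (f g : Fin k → (X → ℂ)),
      (∑ j, f j * g j) = 0 → ∀ x : X,
        (∑ j, ∑ l, (starRingEnd ℂ) (g j x) *
          L (fun y => (starRingEnd ℂ) (f j y) * f l y) x * g l x) ≤ 0) :
    ∃ Q : X → X → ℝ, (∀ x y, 0 ≤ Q x y) ∧
      (∀ x y, Q x y * m x = Q y x * m y) ∧
      (∀ (f : X → ℂ) (x : X), L f x = ∑ y, (Q x y : ℂ) * (f x - f y)) := by
  classical
  set δ : X → X → ℂ := fun y z => if z = y then 1 else 0 with hδ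
  -- off-diagonal entries are nonpositive (in particular real)
  have hneg : ∀ x y : X, x ≠ y → L (δ y) x ≤ 0 := by
    intro x y hxy
    have h0 : (∑ j : Fin 1, (fun _ : Fin 1 => δ y) j * (fun _ : Fin 1 => δ x) j) = 0 := by
      funext z
      simp only [Fin.sum_univ_one, Pi.mul_apply, Pi.zero_apply, hδ]
      rcases eq_or_ne z y with rfl | h
      · simp [Ne.symm hxy]
      · simp [h]
    have h := hcnd 1 (fun _ => δ y) (fun _ => δ x) h0 x
    have hfun : (fun z => (starRingEnd ℂ) (δ y z) * δ y z) = δ y := by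
      funext z; simp only [hδ]; split_ifs <;> simp
    simp only [Fin.sum_univ_one] at h
    rw [hfun] at h
    simpa [hδ] using h
  have hri : ∀ x y : X, x ≠ y → L (δ y) x = ((L (δ y) x).re : ℂ) ∧ (L (δ y) x).re ≤ 0 := by
    intro x y h
    have h2 := hneg x y h
    rw [Complex.le_def] at h2
    refine ⟨?_, by simpa using h2.1⟩
    apply Complex.ext <;> simp [h2.2]
  have hδsum : (∑ y, δ y) = (fun _ : X => (1 : ℂ)) := by
    funext z
    simp [hδ, Finset.sum_apply, Finset.sum_ite_eq]
  have hsum0 : ∀ x, ∑ y, L (δ y) x = 0 := by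
    intro x
    have hz : L (∑ y, δ y) = 0 := by rw [hδsum]; exact h1
    rw [map_sum] at hz
    calc ∑ y, L (δ y) x = (∑ y, L (δ y)) x := by rw [Finset.sum_apply]
      _ = 0 := by rw [hz]; rfl
  refine ⟨fun x y => if x = y then 0 else -(L (δ y) x).re, ?_, ?_, ?_⟩
  · intro x y
    dsimp only
    split_ifs with h
    · exact le_refl _
    · linarith [(hri x y h).2]
  · intro x y
    dsimp only
    rcases eq_or_ne x y with rfl | h
    · simp
    · rw [if_neg h, if_neg (Ne.symm h)]
      have hs := hsymm (δ x) (δ y)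
      have hL : ∑ z, (starRingEnd ℂ) (L (δ x) z) * δ y z * (m z : ℂ)
          = (starRingEnd ℂ) (L (δ x) y) * (m y : ℂ) := by
        rw [Finset.sum_eq_single y]
        · simp [hδ]
        · intro b _ hb; simp [hδ, hb]
        · simp
      have hR : ∑ z, (starRingEnd ℂ) (δ x z) * L (δ y) z * (m z : ℂ)
          = L (δ y) x * (m x : ℂ) := by
        rw [Finset.sum_eq_single x]
        · simp [hδ]
        · intro b _ hb; simp [hδ, hb]
        · simp
      rw [hL, hR, (hri y x (Ne.symm h)).1, (hri x y h).1, Complex.conj_ofReal] at hs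
      have hs' : ((L (δ x) y).re * m y : ℝ) = ((L (δ y) x).re * m x : ℝ) := by
        exact_mod_cast hs
      linarith
  · intro f x
    have hfdec : f = ∑ y, f y • δ y := by
      funext z
      simp [hδ, Finset.sum_apply, Finset.sum_ite_eq]
    have hLf : L f x = ∑ y, f y * L (δ y) x := by
      conv_lhs => rw [hfdec]
      rw [map_sum, Finset.sum_apply]
      refine Finset.sum_congr rfl fun y _ => ?_
      rw [map_smul]; rfl
    rw [hLf]
    have step : ∀ y : X,
        (((if x = y then 0 else -(L (δ y) x).re : ℝ)) : ℂ) * (f x - f y)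
          = -(L (δ y) x) * (f x - f y) := by
      intro y
      rcases eq_or_ne x y with rfl | h
      · simp
      · rw [if_neg h]
        push_cast
        rw [← (hri x y h).1]
    have key : ∑ y, -L (δ y) x * (f x - f y)
        = (∑ y, L (δ y) x * f y) - (∑ y, L (δ y) x) * f x := by
      rw [Finset.sum_mul, ← Finset.sum_sub_distrib]
      exact Finset.sum_congr rfl fun y _ => by ring
    rw [Finset.sum_congr rfl fun y _ => step y, key, hsum0 x]
    simp [mul_comm]
end

section
/- Let 𝓜 be a finite-dimensional C*-algebra (e.g. a *-subalgebra of M_n(ℂ) containing 1), F a Banach 𝓜-bimodule, and δ : 𝓜 → F a bounded derivation (δ(ab) = a δ(b) + δ(a) b). Then δ is inner: with ξ = ∫_{U(𝓜)} u* δ(u) du (the average over the compact unitary group U(𝓜) with respect to normalized Haar measure), one has δ(x) = x ξ − ξ x for all x ∈ 𝓜. -/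
open scoped Matrix.Norms.L2Operator
open MeasureTheory
open scoped ComplexStarModule

set_option maxHeartbeats 1000000
set_option synthInstance.maxHeartbeats 400000

lemma selfAdjoint_mem_span_unitary {A : Type*} [CStarAlgebra A] {a : A}
    (ha : IsSelfAdjoint a) (h1 : ‖a‖ ≤ 1) :
    ∃ u : A, u ∈ unitary A ∧ a = (2⁻¹ : ℂ) • (u + star u) := by
  rcases subsingleton_or_nontrivial A with hA | hA
  · exact ⟨1, (unitary A).one_mem, Subsingleton.elim _ _⟩
  set f : ℝ → ℝ := fun t => Real.sqrt (1 - t^2) with hf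
  set c : A := cfc f a with hc
  have hcsa : IsSelfAdjoint c := cfc_predicate f a
  have hfc : Continuous f := Real.continuous_sqrt.comp (by continuity)
  have hcomm : a * c = c * a := by
    conv_lhs => rw [← cfc_id ℝ a ha]
    conv_rhs => rw [← cfc_id ℝ a ha]
    exact cfc_commute_cfc (id : ℝ → ℝ) f a
  have hsq : a * a + c * c = 1 := by
    have e1 : a * a = cfc (fun t : ℝ => t * t) a := by
      conv_lhs => rw [← cfc_id ℝ a ha]
      exact (cfc_mul _ _ a).symm
    have e2 : c * c = cfc (fun t : ℝ => f t * f t) a := (cfc_mul f f a).symm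
    rw [e1, e2, ← cfc_add .., ← cfc_one ℝ a]
    refine cfc_congr fun t ht => ?_
    have ht' : ‖t‖ ≤ ‖a‖ := spectrum.norm_le_norm_of_mem ht
    have h0 : 0 ≤ 1 - t^2 := by
      have : |t| ≤ 1 := le_trans ht' h1
      nlinarith [abs_nonneg t, sq_abs t]
    simp only [hf, id, Pi.add_apply, Pi.mul_apply, Pi.one_apply, id_eq]
    rw [Real.mul_self_sqrt h0]; ring
  have hstar : star (a + Complex.I • c) = a - Complex.I • c := by
    simp [star_smul, ha.star_eq, hcsa.star_eq, Complex.conj_I, neg_smul, sub_eq_add_neg]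
  refine ⟨a + Complex.I • c, ⟨?_, ?_⟩, ?_⟩
  · rw [hstar, sub_mul, mul_add, mul_add, smul_mul_assoc, smul_mul_assoc, mul_smul_comm,
      mul_smul_comm, smul_smul, Complex.I_mul_I, hcomm]
    simp only [neg_one_smul]
    rw [← hsq]; abel
  · rw [hstar, mul_sub, add_mul, add_mul, smul_mul_assoc, smul_mul_assoc, mul_smul_comm,
      mul_smul_comm, smul_smul, Complex.I_mul_I, hcomm]
    simp only [neg_one_smul]
    rw [← hsq]; abel
  · rw [hstar]; module

lemma span_unitary_eq_top {A : Type*} [CStarAlgebra A] :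
    Submodule.span ℂ (unitary A : Set A) = ⊤ := by
  rw [eq_top_iff]
  rintro x -
  have hsa : ∀ b : A, IsSelfAdjoint b → b ∈ Submodule.span ℂ (unitary A : Set A) := by
    intro b hb
    rcases eq_or_ne b 0 with rfl | hb0
    · exact Submodule.zero_mem _
    · have hnb : (0:ℝ) < ‖b‖ := norm_pos_iff.mpr hb0
      have hb1 : IsSelfAdjoint (((‖b‖ : ℂ))⁻¹ • b) := by
        refine IsSelfAdjoint.smul ?_ hb
        rw [show ((‖b‖:ℂ))⁻¹ = ((‖b‖⁻¹ : ℝ) : ℂ) by norm_cast]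
        exact Complex.conj_ofReal _
      have hn1 : ‖((‖b‖ : ℂ))⁻¹ • b‖ ≤ 1 := by
        rw [norm_smul]
        simp only [norm_inv, Complex.norm_real, Real.norm_eq_abs, abs_of_nonneg hnb.le]
        rw [inv_mul_le_one₀ hnb]
      obtain ⟨u, hu, heq⟩ := selfAdjoint_mem_span_unitary hb1 hn1
      have hmem : (((‖b‖ : ℂ))⁻¹ • b) ∈ Submodule.span ℂ (unitary A : Set A) := by
        rw [heq]
        exact Submodule.smul_mem _ _ (Submodule.add_mem _
          (Submodule.subset_span hu) (Submodule.subset_span (Unitary.star_mem hu)))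
      have := Submodule.smul_mem _ ((‖b‖ : ℂ)) hmem
      rwa [smul_inv_smul₀ (by exact_mod_cast hnb.ne')] at this
  have := realPart_add_I_smul_imaginaryPart x
  rw [← this]
  exact Submodule.add_mem _ (hsa _ (ℜ x).2) (Submodule.smul_mem _ _ (hsa _ (ℑ x).2))

/-- every bounded derivation from a finite-dimensional
C*-algebra (realized as a unital *-subalgebra of `M_n(ℂ)`) into a Banach
bimodule is inner, with implementing vector the Haar average
`ξ = ∫ u* δ(u) du` over the unitary group. -/
theorem stmt_10 {n : ℕ} (S : StarSubalgebra ℂ (Mat n))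
    (F : Type*) [NormedAddCommGroup F] [NormedSpace ℂ F] [CompleteSpace F]
    -- left and right actions making `F` a Banach `S`-bimodule
    (l r : ↥S →ₗ[ℂ] F →ₗ[ℂ] F)
    (hl1 : l 1 = LinearMap.id) (hlmul : ∀ a b : ↥S, l (a * b) = (l a).comp (l b))
    (hr1 : r 1 = LinearMap.id) (hrmul : ∀ a b : ↥S, r (a * b) = (r b).comp (r a))
    (hlr : ∀ (a b : ↥S) (ξ : F), l a (r b ξ) = r b (l a ξ))
    (hnorm : ∀ (a b : ↥S) (ξ : F),
      ‖l a (r b ξ)‖ ≤ ‖(a : Mat n)‖ * ‖ξ‖ * ‖(b : Mat n)‖)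
    -- a bounded derivation
    (δ : ↥S →ₗ[ℂ] F)
    (hder : ∀ a b : ↥S, δ (a * b) = l a (δ b) + r b (δ a))
    (hbd : ∃ C : ℝ, ∀ a : ↥S, ‖δ a‖ ≤ C * ‖(a : Mat n)‖)
    -- normalized (right-invariant) Haar measure on the compact unitary group
    [MeasurableSpace (unitary ↥S)] [BorelSpace (unitary ↥S)]
    (μ : Measure (unitary ↥S)) [IsProbabilityMeasure μ]
    (hμ : ∀ v : unitary ↥S, MeasurePreserving (· * v) μ μ)
    (ξ : F) (hξ : ξ = ∫ u : unitary ↥S, l (star (u : ↥S)) (δ (u : ↥S)) ∂μ) :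
    ∀ x : ↥S, δ x = l x ξ - r x ξ := by
  haveI hFD : FiniteDimensional ℂ ↥S :=
    FiniteDimensional.finiteDimensional_submodule (Subalgebra.toSubmodule S.toSubalgebra)
  haveI : CompleteSpace ↥S := FiniteDimensional.complete ℂ ↥S
  letI : CStarAlgebra ↥S := {}
  haveI : ProperSpace ↥S := FiniteDimensional.proper ℂ ↥S
  haveI : SecondCountableTopology ↥S := inferInstance
  haveI : CompactSpace (unitary ↥S) := by
    have hcpt : IsCompact (unitary ↥S : Set ↥S) := by
      refine Metric.isCompact_of_isClosed_isBounded ?_ ?_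
      · have : (unitary ↥S : Set ↥S) =
            {x : ↥S | star x * x = 1} ∩ {x : ↥S | x * star x = 1} := by
          ext x; exact Unitary.mem_iff
        rw [this]
        exact (isClosed_eq (continuous_star.mul continuous_id) continuous_const).inter
          (isClosed_eq (continuous_id.mul continuous_star) continuous_const)
      · refine isBounded_iff_forall_norm_le.2 ⟨Real.sqrt ‖(1 : ↥S)‖, fun x hx => ?_⟩
        have h1 : star x * x = 1 := hx.1
        have h2 : ‖x‖ * ‖x‖ = ‖(1 : ↥S)‖ := by
          rw [← CStarRing.norm_star_mul_self, h1]
        have h3 : ‖x‖ = Real.sqrt ‖(1 : ↥S)‖ := by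
          rw [← h2, Real.sqrt_mul_self (norm_nonneg x)]
        exact h3.le
    exact isCompact_iff_compactSpace.mp hcpt
  -- bounds and continuous linear maps
  set C : ℝ := ‖(1 : Mat n)‖ with hCdef
  have hLb : ∀ (a : ↥S) (x : F), ‖l a x‖ ≤ C * ‖a‖ * ‖x‖ := by
    intro a x
    calc ‖l a x‖ = ‖l a (r 1 x)‖ := by rw [hr1]; rfl
      _ ≤ ‖(a : Mat n)‖ * ‖x‖ * C := hnorm a 1 x
      _ = C * ‖a‖ * ‖x‖ := by rw [show ‖(a : Mat n)‖ = ‖a‖ from rfl]; ring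
  have hRb : ∀ (b : ↥S) (x : F), ‖r b x‖ ≤ C * ‖b‖ * ‖x‖ := by
    intro b x
    calc ‖r b x‖ = ‖l 1 (r b x)‖ := by rw [hl1]; rfl
      _ ≤ C * ‖x‖ * ‖(b : Mat n)‖ := hnorm 1 b x
      _ = C * ‖b‖ * ‖x‖ := by rw [show ‖(b : Mat n)‖ = ‖b‖ from rfl]; ring
  let Lc : ↥S →L[ℂ] F →L[ℂ] F := LinearMap.mkContinuous₂ l C hLb
  let Rc : ↥S →L[ℂ] F →L[ℂ] F := LinearMap.mkContinuous₂ r C hRb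
  have hLc : ∀ (a : ↥S) (x : F), Lc a x = l a x := fun _ _ => rfl
  have hRc : ∀ (a : ↥S) (x : F), Rc a x = r a x := fun _ _ => rfl
  have hδc : Continuous δ := δ.continuous_of_finiteDimensional
  set g : unitary ↥S → F := fun u => l (star (u : ↥S)) (δ (u : ↥S)) with hg
  have hgc : Continuous g := by
    have : Continuous fun u : unitary ↥S => Lc (star (u : ↥S)) (δ (u : ↥S)) :=
      (Lc.continuous.comp (continuous_star.comp continuous_subtype_val)).clm_apply
        (hδc.comp continuous_subtype_val)
    exact this
  have hgi : Integrable g μ := by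
    refine hgc.integrable_of_hasCompactSupport ?_
    exact IsCompact.of_isClosed_subset isCompact_univ (isClosed_tsupport g) (Set.subset_univ _)
  have hξ' : ξ = ∫ u, g u ∂μ := hξ
  -- key identity for unitaries
  have key : ∀ v : unitary ↥S, δ (v : ↥S) = l (v : ↥S) ξ - r (v : ↥S) ξ := by
    intro v
    have hmul : Continuous (fun u : unitary ↥S => u * v) := by
      apply continuous_induced_rng.mpr
      exact continuous_subtype_val.mul continuous_const
    have hmul' : Continuous (fun u : unitary ↥S => u * v⁻¹) := by
      apply continuous_induced_rng.mpr
      exact continuous_subtype_val.mul continuous_const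
    let e : unitary ↥S ≃ᵐ unitary ↥S :=
      ⟨Equiv.mulRight v, hmul.measurable, hmul'.measurable⟩
    have h1 : ∫ u, g (u * v) ∂μ = ξ := by
      rw [hξ']
      exact MeasurePreserving.integral_comp' (f := e) (hμ v) g
    have h2 : ∀ u : unitary ↥S, g (u * v) =
        l (star (v : ↥S)) (δ (v : ↥S)) + (Lc (star (v : ↥S))).comp (Rc (v : ↥S)) (g u) := by
      intro u
      have hsmu : star (u : ↥S) * (u : ↥S) = 1 := u.2.1
      have huv : ((u * v : unitary ↥S) : ↥S) = (u : ↥S) * (v : ↥S) := rfl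
      calc g (u * v) = l (star (v : ↥S) * star (u : ↥S))
            (l (u : ↥S) (δ (v : ↥S)) + r (v : ↥S) (δ (u : ↥S))) := by
            rw [hg]; simp only [huv, star_mul, hder]
        _ = l (star (v : ↥S)) (l (star (u : ↥S)) (l (u : ↥S) (δ (v : ↥S)))) +
              l (star (v : ↥S)) (l (star (u : ↥S)) (r (v : ↥S) (δ (u : ↥S)))) := by
            rw [hlmul]; simp only [LinearMap.comp_apply, map_add]
        _ = l (star (v : ↥S)) (δ (v : ↥S)) +
              l (star (v : ↥S)) (r (v : ↥S) (l (star (u : ↥S)) (δ (u : ↥S)))) := by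
            rw [← LinearMap.comp_apply (l (star (u : ↥S))) (l (u : ↥S)), ← hlmul, hsmu, hl1,
              hlr]
            rfl
        _ = l (star (v : ↥S)) (δ (v : ↥S)) + (Lc (star (v : ↥S))).comp (Rc (v : ↥S)) (g u) := by
            rw [ContinuousLinearMap.comp_apply, hLc, hRc]
    have h3 : ξ = l (star (v : ↥S)) (δ (v : ↥S)) +
        (Lc (star (v : ↥S))).comp (Rc (v : ↥S)) ξ := by
      have hTint : Integrable (fun u => (Lc (star (v : ↥S))).comp (Rc (v : ↥S)) (g u)) μ :=
        ((Lc (star (v : ↥S))).comp (Rc (v : ↥S))).integrable_comp hgi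
      calc ξ = ∫ u, g (u * v) ∂μ := h1.symm
        _ = ∫ u, (l (star (v : ↥S)) (δ (v : ↥S)) +
              (Lc (star (v : ↥S))).comp (Rc (v : ↥S)) (g u)) ∂μ := by
            exact integral_congr_ae (Filter.Eventually.of_forall h2)
        _ = l (star (v : ↥S)) (δ (v : ↥S)) +
              (Lc (star (v : ↥S))).comp (Rc (v : ↥S)) ξ := by
            rw [integral_add (integrable_const _) hTint, integral_const, probReal_univ,
              ContinuousLinearMap.integral_comp_comm _ hgi, ← hξ']
            simp
    have hmsv : (v : ↥S) * star (v : ↥S) = 1 := v.2.2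
    have h4 := congrArg (l (v : ↥S)) h3
    rw [map_add, ← LinearMap.comp_apply, ← hlmul, hmsv, hl1] at h4
    rw [ContinuousLinearMap.comp_apply, hLc, hRc, ← LinearMap.comp_apply (l (v:↥S)),
      ← hlmul, hmsv, hl1] at h4
    simp only [LinearMap.id_coe, id_eq] at h4
    rw [h4]; abel
  -- extend to all of S by spanning with unitaries
  intro x
  let T : ↥S →ₗ[ℂ] F := δ - l.flip ξ + r.flip ξ
  have hT : ∀ y : ↥S, T y = δ y - l y ξ + r y ξ := fun y => rfl
  have hker : Submodule.span ℂ (unitary ↥S : Set ↥S) ≤ LinearMap.ker T := by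
    rw [Submodule.span_le]
    intro w hw
    have := key ⟨w, hw⟩
    simp only [LinearMap.mem_ker, SetLike.mem_coe]
    rw [hT, this]; abel
  have hx : x ∈ LinearMap.ker T := by
    apply hker
    rw [span_unitary_eq_top]; trivial
  have h0 : δ x - l x ξ + r x ξ = 0 := hx
  have h1 : δ x - (l x ξ - r x ξ) = 0 := by rw [← h0]; abel
  exact sub_eq_zero.mp h1
end
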